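/- If a finite poset [x, 1] above an interval x = [x₀, x₁] in I(B) is a Boolean algebra with n atoms, then the localization I(B)_x = { Δ(y, z) : x ≤ z ≤ y } has exactly 3ⁿ elements. -/
import Mathlib

/-- The interval algebra I(B): intervals [a,b] with a ≤ b in B. -/
def IntAlg (B : Type*) [BooleanAlgebra B] := {p : B × B // p.1 ≤ p.2}

/-- The inclusion order on I(B): [a,b] ≤ [c,d] iff c ≤ a and b ≤ d. -/
instance {B : Type*} [BooleanAlgebra B] : PartialOrder (IntAlg B) where
  le x y := y.1.1 ≤ x.1.1 ∧ x.1.2 ≤ y.1.2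
  le_refl x := ⟨le_refl _, le_refl _⟩
  le_trans x y z h1 h2 := ⟨h2.1.trans h1.1, h1.2.trans h2.2⟩
  le_antisymm x y h1 h2 :=
    Subtype.ext (Prod.ext (le_antisymm h2.1 h1.1) (le_antisymm h1.2 h2.2))

/-- Δ([a,b],[c,d]) = [a ∨ (b ∧ dᶜ), b ∧ (a ∨ cᶜ)] as a pair. -/
def idelta {B : Type*} [BooleanAlgebra B] (y w : IntAlg B) : B × B :=
  (y.1.1 ⊔ (y.1.2 ⊓ w.1.2ᶜ), y.1.2 ⊓ (y.1.1 ⊔ w.1.1ᶜ))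

set_option linter.unusedSectionVars false

section AtomAux

variable {B : Type*} [BooleanAlgebra B]

private lemma atom_le_compl_iff {a u : B} (ha : IsAtom a) : a ≤ uᶜ ↔ ¬ a ≤ u := by
  constructor
  · intro h h'
    exact ha.1 (le_bot_iff.mp ((le_inf h' h).trans_eq inf_compl_eq_bot))
  · intro h
    refine le_compl_iff_disjoint_right.mpr (disjoint_iff.mpr ?_)
    refine ha.2 _ (lt_of_le_of_ne inf_le_left fun he => h ?_)
    exact he ▸ inf_le_right

private lemma atom_le_sup_iff {a u v : B} (ha : IsAtom a) : a ≤ u ⊔ v ↔ a ≤ u ∨ a ≤ v := by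
  constructor
  · intro h
    by_contra hc
    push_neg at hc
    have h1 : a ≤ uᶜ := (atom_le_compl_iff ha).mpr hc.1
    have h2 : a ≤ vᶜ := (atom_le_compl_iff ha).mpr hc.2
    have h3 : a ≤ (u ⊔ v) ⊓ (u ⊔ v)ᶜ := le_inf h (by rw [compl_sup]; exact le_inf h1 h2)
    rw [inf_compl_eq_bot] at h3
    exact ha.1 (le_bot_iff.mp h3)
  · rintro (h | h)
    exacts [h.trans le_sup_left, h.trans le_sup_right]

variable [Fintype B]

private lemma le_of_atoms {u v : B} (h : ∀ a : B, IsAtom a → a ≤ u → a ≤ v) : u ≤ v := by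
  by_contra hc
  have hne : u \ v ≠ ⊥ := fun he => hc (sdiff_eq_bot_iff.mp he)
  rcases (eq_bot_or_exists_atom_le (u \ v)).resolve_left hne with ⟨a, ha, hle⟩
  rw [sdiff_eq] at hle
  exact (atom_le_compl_iff ha).mp (hle.trans inf_le_right)
    (h a ha (hle.trans inf_le_left))

private lemma eq_of_atoms {u v : B} (h : ∀ a : B, IsAtom a → (a ≤ u ↔ a ≤ v)) : u = v :=
  le_antisymm (le_of_atoms fun a ha h' => (h a ha).1 h')
    (le_of_atoms fun a ha h' => (h a ha).2 h')

private lemma atom_le_finsetSup_iff {ι : Type*} {a : B} (ha : IsAtom a) (s : Finset ι)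
    (g : ι → B) : a ≤ s.sup g ↔ ∃ i ∈ s, a ≤ g i := by
  classical
  induction s using Finset.cons_induction with
  | empty => simp [le_bot_iff, ha.1]
  | cons i s hi ih =>
    rw [Finset.sup_cons, atom_le_sup_iff ha, ih]
    simp

end AtomAux

section Pairs

variable {B : Type*} [BooleanAlgebra B] [Fintype B]

private lemma card_pairs (m : B) :
    Nat.card {q : B × B // q.1 ≤ q.2 ∧ q.2 ≤ m} = 3 ^ Nat.card {a : B // IsAtom a ∧ a ≤ m} := by
  classical
  set K := {a : B // IsAtom a ∧ a ≤ m} with hK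
  set φ : {q : B × B // q.1 ≤ q.2 ∧ q.2 ≤ m} → (K → Fin 3) :=
    fun q a => if a.1 ≤ q.1.1 then 2 else if a.1 ≤ q.1.2 then 1 else 0 with hφ
  have key : ∀ (q : {q : B × B // q.1 ≤ q.2 ∧ q.2 ≤ m}) (a : K),
      (φ q a = 2 ↔ a.1 ≤ q.1.1) ∧ (φ q a ≠ 0 ↔ a.1 ≤ q.1.2) := by
    intro q a
    by_cases h1 : a.1 ≤ q.1.1
    · simp [hφ, h1, h1.trans q.2.1]
    · by_cases h2 : a.1 ≤ q.1.2 <;> simp [hφ, h1, h2]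
  have hinj : Function.Injective φ := by
    intro q q' h
    refine Subtype.ext (Prod.ext ?_ ?_)
    · refine eq_of_atoms fun c hc => ?_
      by_cases hcm : c ≤ m
      · rw [← (key q ⟨c, hc, hcm⟩).1, ← (key q' ⟨c, hc, hcm⟩).1, h]
      · exact iff_of_false (fun hle => hcm (hle.trans (q.2.1.trans q.2.2)))
          (fun hle => hcm (hle.trans (q'.2.1.trans q'.2.2)))
    · refine eq_of_atoms fun c hc => ?_
      by_cases hcm : c ≤ m
      · rw [← (key q ⟨c, hc, hcm⟩).2, ← (key q' ⟨c, hc, hcm⟩).2, h]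
      · exact iff_of_false (fun hle => hcm (hle.trans q.2.2))
          (fun hle => hcm (hle.trans q'.2.2))
  have hsurj : Function.Surjective φ := by
    intro f
    set U := Finset.univ.sup (fun a : K => if f a = 2 then a.1 else ⊥) with hU
    set W := Finset.univ.sup (fun a : K => if f a ≠ 0 then a.1 else ⊥) with hW
    have hUW : U ≤ W := by
      refine Finset.sup_mono_fun fun a _ => ?_
      by_cases h : f a = 2 <;> simp [h]
    have hWm : W ≤ m := by
      refine Finset.sup_le fun a _ => ?_
      by_cases h : f a ≠ 0 <;> simp [h, a.2.2]
    have hUiff : ∀ a : K, a.1 ≤ U ↔ f a = 2 := by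
      intro a
      rw [hU, atom_le_finsetSup_iff a.2.1]
      constructor
      · rintro ⟨i, -, hi⟩
        by_cases h : f i = 2
        · rw [if_pos h] at hi
          have he : a = i := Subtype.ext (((i.2.1.le_iff).mp hi).resolve_left a.2.1.1)
          rw [he]; exact h
        · rw [if_neg h] at hi
          exact absurd (le_bot_iff.mp hi) a.2.1.1
      · intro h
        exact ⟨a, Finset.mem_univ a, by rw [if_pos h]⟩
    have hWiff : ∀ a : K, a.1 ≤ W ↔ f a ≠ 0 := by
      intro a
      rw [hW, atom_le_finsetSup_iff a.2.1]
      constructor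
      · rintro ⟨i, -, hi⟩
        by_cases h : f i ≠ 0
        · rw [if_pos h] at hi
          have he : a = i := Subtype.ext (((i.2.1.le_iff).mp hi).resolve_left a.2.1.1)
          rw [he]; exact h
        · rw [if_neg h] at hi
          exact absurd (le_bot_iff.mp hi) a.2.1.1
      · intro h
        exact ⟨a, Finset.mem_univ a, by rw [if_pos h]⟩
    refine ⟨⟨(U, W), hUW, hWm⟩, funext fun a => ?_⟩
    have fin3 : ∀ v : Fin 3, v = 0 ∨ v = 1 ∨ v = 2 := by decide
    show (if a.1 ≤ U then (2 : Fin 3) else if a.1 ≤ W then 1 else 0) = f a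
    rcases fin3 (f a) with h | h | h
    · rw [if_neg, if_neg, h]
      · rw [hWiff]; simp [h]
      · rw [hUiff]; simp [h]
    · rw [if_neg, if_pos, h]
      · rw [hWiff]; simp [h]
      · rw [hUiff]; simp [h]
    · rw [if_pos, h]
      rw [hUiff]; exact h
  have hcard := Nat.card_congr (Equiv.ofBijective φ ⟨hinj, hsurj⟩)
  rw [hcard, Nat.card_fun]
  simp

end Pairs

section Covers

variable {B : Type*} [BooleanAlgebra B] [Fintype B]

/-- Explicit constructor keeping the `IntAlg` type. -/
private def mkI (a b : B) (h : a ≤ b) : IntAlg B := ⟨(a, b), h⟩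

private def emap (x0 x1 a b : B) : B := (x0 ⊓ aᶜ) ⊔ (b ⊓ x1ᶜ)

private lemma emap_le_m (x0 x1 a b : B) : emap x0 x1 a b ≤ x0 ⊔ x1ᶜ :=
  sup_le (inf_le_left.trans le_sup_left) (inf_le_right.trans le_sup_right)

private lemma emap_mono_iff {x0 x1 a b a' b' : B} (hx : x0 ≤ x1)
    (ha : a ≤ x0) (hb : x1 ≤ b) (ha' : a' ≤ x0) (hb' : x1 ≤ b') :
    emap x0 x1 a b ≤ emap x0 x1 a' b' ↔ a' ≤ a ∧ b ≤ b' := by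
  constructor
  · intro h
    constructor
    · refine le_of_atoms fun c hc hca' => ?_
      by_contra hcna
      have h1 : c ≤ emap x0 x1 a b :=
        (le_inf (hca'.trans ha') ((atom_le_compl_iff hc).mpr hcna)).trans le_sup_left
      rcases (atom_le_sup_iff hc).mp (h1.trans h) with h2 | h2
      · exact (atom_le_compl_iff hc).mp (h2.trans inf_le_right) hca'
      · exact (atom_le_compl_iff hc).mp (h2.trans inf_le_right)
          (((hca'.trans ha').trans hx))
    · refine le_of_atoms fun c hc hcb => ?_
      by_cases hcx1 : c ≤ x1
      · exact hcx1.trans hb'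
      · have h1 : c ≤ emap x0 x1 a b :=
          (le_inf hcb ((atom_le_compl_iff hc).mpr hcx1)).trans le_sup_right
        rcases (atom_le_sup_iff hc).mp (h1.trans h) with h2 | h2
        · exact absurd ((h2.trans inf_le_left).trans hx) hcx1
        · exact h2.trans inf_le_left
  · rintro ⟨h1, h2⟩
    exact sup_le_sup (inf_le_inf_left _ (compl_le_compl h1)) (inf_le_inf_right _ h2)

private lemma emap_inj {x0 x1 a b a' b' : B} (hx : x0 ≤ x1)
    (ha : a ≤ x0) (hb : x1 ≤ b) (ha' : a' ≤ x0) (hb' : x1 ≤ b')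
    (h : emap x0 x1 a b = emap x0 x1 a' b') : a = a' ∧ b = b' := by
  obtain ⟨h1, h2⟩ := (emap_mono_iff hx ha hb ha' hb').mp h.le
  obtain ⟨h3, h4⟩ := (emap_mono_iff hx ha' hb' ha hb).mp h.ge
  exact ⟨le_antisymm h3 h1, le_antisymm h2 h4⟩

private lemma emap_self (x0 x1 : B) : emap x0 x1 x0 x1 = ⊥ := by
  simp [emap]

private lemma emap_surj {x0 x1 c : B} (hx : x0 ≤ x1) (hcm : c ≤ x0 ⊔ x1ᶜ) :
    emap x0 x1 (x0 ⊓ cᶜ) (x1 ⊔ c) = c := by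
  refine eq_of_atoms fun p hp => ?_
  have hm : p ≤ c → p ≤ x0 ∨ ¬ p ≤ x1 := fun h => by
    rcases (atom_le_sup_iff hp).mp (h.trans hcm) with h' | h'
    · exact Or.inl h'
    · exact Or.inr ((atom_le_compl_iff hp).mp h')
  have hxy : p ≤ x0 → p ≤ x1 := fun h => h.trans hx
  simp only [emap, atom_le_sup_iff hp, le_inf_iff, atom_le_compl_iff hp]
  tauto

private lemma card_covers (x : IntAlg B) :
    Nat.card {y : IntAlg B // x ⋖ y}
      = Nat.card {a : B // IsAtom a ∧ a ≤ x.1.1 ⊔ x.1.2ᶜ} := by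
  obtain ⟨hx⟩ := And.intro x.2 trivial
  set x0 := x.1.1 with hx0
  set x1 := x.1.2 with hx1
  have hxeq : ∀ w : IntAlg B, w.1.1 = x0 → w.1.2 = x1 → w = x := by
    intro w h1 h2
    exact Subtype.ext (Prod.ext h1 h2)
  have hcov : ∀ c : B, IsAtom c → c ≤ x0 ⊔ x1ᶜ →
      x ⋖ mkI (x0 ⊓ cᶜ) (x1 ⊔ c) ((inf_le_left.trans hx).trans le_sup_left) := by
    intro c hca hcm
    refine ⟨lt_of_le_of_ne ⟨inf_le_left, le_sup_left⟩ fun he => ?_, ?_⟩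
    · have h1 : x0 = x0 ⊓ cᶜ := congrArg (fun t : IntAlg B => t.1.1) he
      have h2 : x1 = x1 ⊔ c := congrArg (fun t : IntAlg B => t.1.2) he
      have h3 : emap x0 x1 (x0 ⊓ cᶜ) (x1 ⊔ c) = ⊥ := by
        rw [← h1, ← h2, emap_self]
      rw [emap_surj hx hcm] at h3
      exact hca.1 h3
    · intro w hxw hwz
      have hw : w.1.1 ≤ x0 ∧ x1 ≤ w.1.2 := hxw.le
      have hwz' : x0 ⊓ cᶜ ≤ w.1.1 ∧ w.1.2 ≤ x1 ⊔ c := hwz.le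
      have hwle : emap x0 x1 w.1.1 w.1.2 ≤ emap x0 x1 (x0 ⊓ cᶜ) (x1 ⊔ c) :=
        (emap_mono_iff hx hw.1 hw.2 inf_le_left le_sup_left).mpr hwz'
      rw [emap_surj hx hcm] at hwle
      rcases hca.le_iff.mp hwle with h0 | h0
      · rw [← emap_self x0 x1] at h0
        obtain ⟨e1, e2⟩ := emap_inj hx hw.1 hw.2 le_rfl le_rfl h0
        exact absurd (hxeq w e1 e2) hxw.ne'
      · rw [← emap_surj hx hcm] at h0
        obtain ⟨e1, e2⟩ := emap_inj hx hw.1 hw.2 inf_le_left le_sup_left h0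
        exact absurd (Subtype.ext (Prod.ext e1 e2)) hwz.ne
  set F : {a : B // IsAtom a ∧ a ≤ x0 ⊔ x1ᶜ} → {y : IntAlg B // x ⋖ y} :=
    fun c => ⟨mkI (x0 ⊓ c.1ᶜ) (x1 ⊔ c.1) ((inf_le_left.trans hx).trans le_sup_left),
      hcov c.1 c.2.1 c.2.2⟩ with hF
  have hinj : Function.Injective F := by
    intro c c' h
    have h1 : x0 ⊓ c.1ᶜ = x0 ⊓ c'.1ᶜ := congrArg (fun t : {y : IntAlg B // x ⋖ y} => t.1.1.1) h
    have h2 : x1 ⊔ c.1 = x1 ⊔ c'.1 := congrArg (fun t : {y : IntAlg B // x ⋖ y} => t.1.1.2) h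
    refine Subtype.ext ?_
    rw [← emap_surj hx c.2.2, h1, h2, emap_surj hx c'.2.2]
  have hsurj : Function.Surjective F := by
    intro y
    have hy : y.1.1.1 ≤ x0 ∧ x1 ≤ y.1.1.2 := y.2.lt.le
    set c : B := emap x0 x1 y.1.1.1 y.1.1.2 with hc
    have hcm : c ≤ x0 ⊔ x1ᶜ := emap_le_m _ _ _ _
    have hca : IsAtom c := by
      constructor
      · intro hbot
        have h0 : emap x0 x1 y.1.1.1 y.1.1.2 ≤ emap x0 x1 x0 x1 := by
          rw [emap_self, ← hc, hbot]
        obtain ⟨e1, e2⟩ := (emap_mono_iff hx hy.1 hy.2 le_rfl le_rfl).mp h0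
        exact y.2.lt.not_ge ⟨e1, e2⟩
      · intro d hd
        by_contra hdne
        have hdm : d ≤ x0 ⊔ x1ᶜ := hd.le.trans hcm
        have hxz : x < mkI (x0 ⊓ dᶜ) (x1 ⊔ d) ((inf_le_left.trans hx).trans le_sup_left) := by
          refine lt_of_le_of_ne ⟨inf_le_left, le_sup_left⟩ fun he => hdne ?_
          have h1 : x0 = x0 ⊓ dᶜ := congrArg (fun t : IntAlg B => t.1.1) he
          have h2 : x1 = x1 ⊔ d := congrArg (fun t : IntAlg B => t.1.2) he
          rw [← emap_surj hx hdm, ← h1, ← h2, emap_self]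
        have hzy : mkI (x0 ⊓ dᶜ) (x1 ⊔ d) ((inf_le_left.trans hx).trans le_sup_left) < y.1 := by
          refine lt_of_le_of_ne ?_ fun he => ?_
          · have h0 : emap x0 x1 (x0 ⊓ dᶜ) (x1 ⊔ d) ≤ emap x0 x1 y.1.1.1 y.1.1.2 := by
              rw [emap_surj hx hdm, ← hc]; exact hd.le
            exact (emap_mono_iff hx inf_le_left le_sup_left hy.1 hy.2).mp h0
          · have h1 : x0 ⊓ dᶜ = y.1.1.1 := congrArg (fun t : IntAlg B => t.1.1) he
            have h2 : x1 ⊔ d = y.1.1.2 := congrArg (fun t : IntAlg B => t.1.2) he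
            have hdc : d = c := by rw [← emap_surj hx hdm, h1, h2, hc]
            exact hd.ne hdc
        exact y.2.2 hxz hzy
    refine ⟨⟨c, hca, hcm⟩, ?_⟩
    refine Subtype.ext (Subtype.ext ?_)
    have h0 : emap x0 x1 (x0 ⊓ cᶜ) (x1 ⊔ c) = emap x0 x1 y.1.1.1 y.1.1.2 := by
      rw [emap_surj hx hcm, hc]
    obtain ⟨e1, e2⟩ := emap_inj hx inf_le_left le_sup_left hy.1 hy.2 h0
    exact Prod.ext e1 e2
  exact (Nat.card_congr (Equiv.ofBijective F ⟨hinj, hsurj⟩)).symm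

end Covers

set_option maxHeartbeats 2000000 in
/-- If the Boolean algebra [x, 1] in I(B) has n atoms (equivalently, x has n
covers), then the localization I(B)_x = { Δ(y,z) : x ≤ z ≤ y } has 3ⁿ elements. -/
theorem stmt12 {B : Type*} [BooleanAlgebra B] [Fintype B] (x : IntAlg B) (n : ℕ)
    (hn : Nat.card {y : IntAlg B // x ⋖ y} = n) :
    Nat.card {p : B × B | ∃ y z : IntAlg B, x ≤ z ∧ z ≤ y ∧ p = idelta y z} = 3 ^ n := by
  classical
  obtain ⟨hx⟩ := And.intro x.2 trivial
  set x0 := x.1.1 with hx0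
  set x1 := x.1.2 with hx1
  have hset : {p : B × B | ∃ y z : IntAlg B, x ≤ z ∧ z ≤ y ∧ p = idelta y z}
      = {p : B × B | p.1 ≤ p.2 ∧ p.1 ≤ x0 ⊔ x1ᶜ ∧ x0ᶜ ⊓ x1 ≤ p.2} := by
    ext ⟨u, v⟩
    simp only [Set.mem_setOf_eq]
    constructor
    · rintro ⟨y, z, hxz, hzy, hp⟩
      have hxz' : z.1.1 ≤ x0 ∧ x1 ≤ z.1.2 := hxz
      have hzy' : y.1.1 ≤ z.1.1 ∧ z.1.2 ≤ y.1.2 := hzy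
      obtain ⟨hc0, h1d⟩ := hxz'
      obtain ⟨hac, hdb⟩ := hzy'
      have hab : y.1.1 ≤ y.1.2 := y.2
      simp only [idelta, Prod.mk.injEq] at hp
      obtain ⟨hu, hv⟩ := hp
      subst hu; subst hv
      refine ⟨?_, ?_, ?_⟩
      · refine sup_le (le_inf hab le_sup_left) (le_inf inf_le_left ?_)
        exact inf_le_right.trans
          ((compl_le_compl (hc0.trans (hx.trans h1d))).trans le_sup_right)
      · exact sup_le ((hac.trans hc0).trans le_sup_left)
          ((inf_le_right.trans (compl_le_compl h1d)).trans le_sup_right)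
      · exact le_inf (inf_le_right.trans (h1d.trans hdb))
          ((inf_le_left.trans (compl_le_compl hc0)).trans le_sup_right)
    · rintro ⟨huv, hum, hmv⟩
      refine ⟨mkI (u ⊓ x0) (x1 ⊔ v) ((inf_le_right.trans hx).trans le_sup_left),
        mkI (x0 ⊓ (u ⊔ vᶜ)) (x1 ⊔ (v ⊓ uᶜ)) ((inf_le_left.trans hx).trans le_sup_left),
        ⟨inf_le_left, le_sup_left⟩,
        ⟨le_inf inf_le_right (inf_le_left.trans le_sup_left), sup_le_sup_left inf_le_left _⟩, ?_⟩
      simp only [idelta, mkI, Prod.mk.injEq]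
      constructor
      · refine eq_of_atoms fun p hp => ?_
        have h1 : p ≤ u → p ≤ v := fun h => h.trans huv
        have h2 : p ≤ u → p ≤ x0 ∨ ¬ p ≤ x1 := fun h => by
          rcases (atom_le_sup_iff hp).mp (h.trans hum) with h' | h'
          · exact Or.inl h'
          · exact Or.inr ((atom_le_compl_iff hp).mp h')
        have h3 : ¬ p ≤ x0 → p ≤ x1 → p ≤ v := fun hn1 hy =>
          (le_inf ((atom_le_compl_iff hp).mpr hn1) hy).trans hmv
        have h4 : p ≤ x0 → p ≤ x1 := fun h => h.trans hx
        simp only [atom_le_sup_iff hp, le_inf_iff, atom_le_compl_iff hp]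
        tauto
      · refine eq_of_atoms fun p hp => ?_
        have h1 : p ≤ u → p ≤ v := fun h => h.trans huv
        have h2 : p ≤ u → p ≤ x0 ∨ ¬ p ≤ x1 := fun h => by
          rcases (atom_le_sup_iff hp).mp (h.trans hum) with h' | h'
          · exact Or.inl h'
          · exact Or.inr ((atom_le_compl_iff hp).mp h')
        have h3 : ¬ p ≤ x0 → p ≤ x1 → p ≤ v := fun hn1 hy =>
          (le_inf ((atom_le_compl_iff hp).mpr hn1) hy).trans hmv
        have h4 : p ≤ x0 → p ≤ x1 := fun h => h.trans hx
        simp only [atom_le_sup_iff hp, le_inf_iff, atom_le_compl_iff hp]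
        tauto
  rw [hset]
  have E1 : {p : B × B | p.1 ≤ p.2 ∧ p.1 ≤ x0 ⊔ x1ᶜ ∧ x0ᶜ ⊓ x1 ≤ p.2}
      ≃ {q : B × B // q.1 ≤ q.2 ∧ q.2 ≤ x0 ⊔ x1ᶜ} := by
    refine ⟨fun p => ⟨(p.1.1, p.1.2 ⊓ (x0 ⊔ x1ᶜ)), ?_, inf_le_right⟩,
            fun q => ⟨(q.1.1, q.1.2 ⊔ (x0ᶜ ⊓ x1)), ?_, ?_, le_sup_right⟩, ?_, ?_⟩
    · obtain ⟨h1, h2, h3⟩ := p.2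
      exact le_inf h1 h2
    · exact q.2.1.trans le_sup_left
    · exact q.2.1.trans q.2.2
    · intro p
      obtain ⟨h1, h2, h3⟩ := p.2
      refine Subtype.ext (Prod.ext rfl ?_)
      refine eq_of_atoms fun c hc => ?_
      have h3' : ¬ c ≤ x0 → c ≤ x1 → c ≤ p.1.2 := fun hn1 hy =>
        (le_inf ((atom_le_compl_iff hc).mpr hn1) hy).trans h3
      simp only [atom_le_sup_iff hc, le_inf_iff, atom_le_compl_iff hc]
      tauto
    · intro q
      obtain ⟨h1, h2⟩ := q.2
      refine Subtype.ext (Prod.ext rfl ?_)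
      refine eq_of_atoms fun c hc => ?_
      have h2' : c ≤ q.1.2 → c ≤ x0 ∨ ¬ c ≤ x1 := fun h => by
        rcases (atom_le_sup_iff hc).mp (h.trans h2) with h' | h'
        · exact Or.inl h'
        · exact Or.inr ((atom_le_compl_iff hc).mp h')
      simp only [atom_le_sup_iff hc, le_inf_iff, atom_le_compl_iff hc]
      tauto
  rw [Nat.card_congr E1, card_pairs, ← card_covers x, hn]
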